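/- arXiv:2306.00620 — 2 statements merged into one kernel-verified Lean document; each statement's English description precedes it below -/
import Mathlib

section
/- Let a be a nonnegative sequence in ℝ^n and b a nonnegative sequence in ℝ^n with b_{n−t+1} = ... = b_n = 0. Define the shift b' by b'_i = b_{i−t} for i = t+1,...,n and b'_i = 0 for i ≤ t. Then the unbalanced OT distance satisfies |Ŵ_m(a, b') − Ŵ_m(a, b)| ≤ t · (∑_{i=1}^n a_i). -/
open Finset

noncomputable section

/-- Cumulative sum `A(i) = ∑_{j=1}^i a j`. -/
def cumsum (a : ℕ → ℝ) (i : ℕ) : ℝ := ∑ j ∈ Finset.Icc 1 i, a j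

/-- Windowed cumulative sum `A_s(i) = ∑_{j=1}^i a j − ∑_{j=1}^{i−s} a j`. -/
def wcumsum (a : ℕ → ℝ) (s i : ℕ) : ℝ := cumsum a i - cumsum a (i - s)

/-- Transport cost `⟨T, D⟩` with `D_{ij} = |i − j|`, indices in `[1, n]`. -/
def otCost (n : ℕ) (T : ℕ → ℕ → ℝ) : ℝ :=
  ∑ i ∈ Finset.Icc 1 n, ∑ j ∈ Finset.Icc 1 n, T i j * |(i : ℝ) - (j : ℝ)|

/-- Feasible (balanced) transport plan: nonnegative, row sums `a`, column sums `b`. -/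
def IsPlan (n : ℕ) (a b : ℕ → ℝ) (T : ℕ → ℕ → ℝ) : Prop :=
  (∀ i ∈ Finset.Icc 1 n, ∀ j ∈ Finset.Icc 1 n, 0 ≤ T i j) ∧
  (∀ i ∈ Finset.Icc 1 n, ∑ j ∈ Finset.Icc 1 n, T i j = a i) ∧
  (∀ j ∈ Finset.Icc 1 n, ∑ i ∈ Finset.Icc 1 n, T i j = b j)

/-- Balanced optimal transport distance with cost `|i − j|`. -/
def W (n : ℕ) (a b : ℕ → ℝ) : ℝ :=
  sInf {c | ∃ T, IsPlan n a b T ∧ c = otCost n T}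

/-- Extended cost matrix `D(m)`: `|i−j|` on `[1,n]×[1,n]`, `m` to/from the sink `n+1`,
`0` between sinks. -/
def Dm (n : ℕ) (m : ℝ) (i j : ℕ) : ℝ :=
  if i = n + 1 then (if j = n + 1 then 0 else m)
  else if j = n + 1 then m else |(i : ℝ) - (j : ℝ)|

/-- Extended sequence: append `mass` at the sink index `n+1`. -/
def extSeq (n : ℕ) (a : ℕ → ℝ) (mass : ℝ) (i : ℕ) : ℝ :=
  if i = n + 1 then mass else a i

/-- Unbalanced transport cost `⟨T, D(m)⟩`, indices in `[1, n+1]`. -/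
def uCost (n : ℕ) (m : ℝ) (T : ℕ → ℕ → ℝ) : ℝ :=
  ∑ i ∈ Finset.Icc 1 (n+1), ∑ j ∈ Finset.Icc 1 (n+1), T i j * Dm n m i j

/-- Feasible unbalanced plan: nonnegative, row sums `â = (a, ∑ b)`, column sums
`b̂ = (b, ∑ a)`. -/
def IsUPlan (n : ℕ) (a b : ℕ → ℝ) (T : ℕ → ℕ → ℝ) : Prop :=
  (∀ i ∈ Finset.Icc 1 (n+1), ∀ j ∈ Finset.Icc 1 (n+1), 0 ≤ T i j) ∧
  (∀ i ∈ Finset.Icc 1 (n+1), ∑ j ∈ Finset.Icc 1 (n+1), T i j = extSeq n a (cumsum b n) i) ∧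
  (∀ j ∈ Finset.Icc 1 (n+1), ∑ i ∈ Finset.Icc 1 (n+1), T i j = extSeq n b (cumsum a n) j)

/-- Unbalanced optimal transport distance `Ŵ_m(a, b)`. -/
def uW (n : ℕ) (m : ℝ) (a b : ℕ → ℝ) : ℝ :=
  sInf {c | ∃ T, IsUPlan n a b T ∧ c = uCost n m T}

/-- Global OTW distance `OTW_m(a,b) = m|A(n) − B(n)| + ∑_{i=1}^{n−1} |A(i) − B(i)|`. -/
def otwGlobal (n : ℕ) (m : ℝ) (a b : ℕ → ℝ) : ℝ :=
  m * |cumsum a n - cumsum b n| +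
    ∑ i ∈ Finset.Icc 1 (n-1), |cumsum a i - cumsum b i|

/-- Local OTW distance with window `s`:
`OTW_{m,s}(a,b) = m|A_s(n) − B_s(n)| + ∑_{i=1}^{n−1} |A_s(i) − B_s(i)|`. -/
def otwLocal (n : ℕ) (m : ℝ) (s : ℕ) (a b : ℕ → ℝ) : ℝ :=
  m * |wcumsum a s n - wcumsum b s n| +
    ∑ i ∈ Finset.Icc 1 (n-1), |wcumsum a s i - wcumsum b s i|

/-- Smooth ℓ1-loss `L_β`. -/
def smoothL1 (β x : ℝ) : ℝ := if |x| < β then x^2 / (2*β) else |x| - β/2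

/-- Smoothed OTW distance `OTW^β_{m,s}`. -/
def otwSmooth (n : ℕ) (m : ℝ) (s : ℕ) (β : ℝ) (a b : ℕ → ℝ) : ℝ :=
  m * smoothL1 β (wcumsum a s n - wcumsum b s n) +
    ∑ i ∈ Finset.Icc 1 (n-1), smoothL1 β (wcumsum a s i - wcumsum b s i)

/- ## auxiliary lemmas -/

theorem reidx (n t : ℕ) (ht : t ≤ n) (f : ℕ → ℝ) :
    ∑ j ∈ Finset.Icc (t+1) n, f j = ∑ j ∈ Finset.Icc 1 (n-t), f (j + t) := by
  apply Finset.sum_nbij' (fun j => j - t) (fun j => j + t) <;>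
    (intro j hj; simp [Finset.mem_Icc] at *) <;>
    first
      | omega
      | skip
  congr 1; omega

theorem ssplit (n s : ℕ) (hs : s ≤ n) (f : ℕ → ℝ) :
    ∑ j ∈ Finset.Icc 1 n, f j = ∑ j ∈ Finset.Icc 1 s, f j + ∑ j ∈ Finset.Icc (s+1) n, f j := by
  rw [← Finset.sum_union]
  · congr 1
    ext x; simp [Finset.mem_Icc, Finset.mem_union]; omega
  · rw [Finset.disjoint_left]; intro x hx hx'; simp [Finset.mem_Icc] at hx hx'; omega

theorem sIccTop (n : ℕ) (f : ℕ → ℝ) :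
    ∑ j ∈ Finset.Icc 1 (n+1), f j = ∑ j ∈ Finset.Icc 1 n, f j + f (n+1) := by
  rw [Finset.sum_Icc_succ_top] ; omega

theorem Dm_nonneg (n : ℕ) (m : ℝ) (hm : 0 ≤ m) (i j : ℕ) : 0 ≤ Dm n m i j := by
  unfold Dm; split_ifs <;> first | rfl | exact hm | exact abs_nonneg _

theorem uCost_nonneg (n : ℕ) (m : ℝ) (hm : 0 ≤ m) (T : ℕ → ℕ → ℝ)
    (hT : ∀ i ∈ Finset.Icc 1 (n+1), ∀ j ∈ Finset.Icc 1 (n+1), 0 ≤ T i j) :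
    0 ≤ uCost n m T := by
  apply Finset.sum_nonneg; intro i hi
  apply Finset.sum_nonneg; intro j hj
  exact mul_nonneg (hT i hi j hj) (Dm_nonneg n m hm i j)

theorem uW_bddBelow (n : ℕ) (m : ℝ) (hm : 0 ≤ m) (a b : ℕ → ℝ) :
    BddBelow {c | ∃ T, IsUPlan n a b T ∧ c = uCost n m T} := by
  refine ⟨0, ?_⟩
  rintro c ⟨T, hT, rfl⟩
  exact uCost_nonneg n m hm T hT.1

theorem colzero (n : ℕ) (a b : ℕ → ℝ) (T : ℕ → ℕ → ℝ) (hT : IsUPlan n a b T)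
    (j : ℕ) (hj : j ∈ Finset.Icc 1 n) (hbj : b j = 0) :
    ∀ i ∈ Finset.Icc 1 (n+1), T i j = 0 := by
  obtain ⟨hpos, _, hcol⟩ := hT
  have hj' : j ∈ Finset.Icc 1 (n+1) := by simp [Finset.mem_Icc] at *; omega
  have hjne : j ≠ n + 1 := by simp [Finset.mem_Icc] at hj; omega
  have hs : ∑ i ∈ Finset.Icc 1 (n+1), T i j = 0 := by
    rw [hcol j hj', extSeq, if_neg hjne, hbj]
  intro i hi
  have := (Finset.sum_eq_zero_iff_of_nonneg (fun i hi => hpos i hi j hj')).1 hs i hi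
  exact this

theorem uPlan_exists (n : ℕ) (a b : ℕ → ℝ)
    (ha : ∀ i ∈ Finset.Icc 1 n, 0 ≤ a i) (hb : ∀ i ∈ Finset.Icc 1 n, 0 ≤ b i) :
    ∃ T, IsUPlan n a b T := by
  set A := cumsum a n with hA
  set B := cumsum b n with hB
  have hA0 : 0 ≤ A := Finset.sum_nonneg ha
  have hB0 : 0 ≤ B := Finset.sum_nonneg hb
  set S := A + B with hS
  have hSnn : 0 ≤ S := by linarith
  have hhata : ∀ i ∈ Finset.Icc 1 (n+1), 0 ≤ extSeq n a B i := by
    intro i hi; unfold extSeq; split_ifs with h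
    · exact hB0
    · exact ha i (by simp [Finset.mem_Icc] at *; omega)
  have hhatb : ∀ j ∈ Finset.Icc 1 (n+1), 0 ≤ extSeq n b A j := by
    intro j hj; unfold extSeq; split_ifs with h
    · exact hA0
    · exact hb j (by simp [Finset.mem_Icc] at *; omega)
  have hsuma : ∑ i ∈ Finset.Icc 1 (n+1), extSeq n a B i = S := by
    rw [sIccTop]
    have h1 : ∑ i ∈ Finset.Icc 1 n, extSeq n a B i = A := by
      apply Finset.sum_congr rfl
      intro i hi; simp [Finset.mem_Icc] at hi
      unfold extSeq; rw [if_neg (by omega)]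
    rw [h1]; unfold extSeq; rw [if_pos rfl]
  have hsumb : ∑ j ∈ Finset.Icc 1 (n+1), extSeq n b A j = S := by
    rw [sIccTop]
    have h1 : ∑ j ∈ Finset.Icc 1 n, extSeq n b A j = B := by
      apply Finset.sum_congr rfl
      intro j hj; simp [Finset.mem_Icc] at hj
      unfold extSeq; rw [if_neg (by omega)]
    rw [h1]; unfold extSeq; rw [if_pos rfl]; ring
  refine ⟨fun i j => extSeq n a B i * extSeq n b A j / S, ?_, ?_, ?_⟩
  · intro i hi j hj
    exact div_nonneg (mul_nonneg (hhata i hi) (hhatb j hj)) hSnn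
  · intro i hi
    rw [← Finset.sum_div, ← Finset.mul_sum, hsumb]
    by_cases h : S = 0
    · have hz : extSeq n a B i = 0 := by
        have := Finset.sum_eq_zero_iff_of_nonneg hhata
        rw [hsuma, h] at this
        exact (this.1 rfl) i hi
      rw [hz, h]; simp
    · rw [mul_div_assoc, div_self h, mul_one]
  · intro j hj
    rw [← Finset.sum_div, ← Finset.sum_mul, hsuma]
    by_cases h : S = 0
    · have hz : extSeq n b A j = 0 := by
        have := Finset.sum_eq_zero_iff_of_nonneg hhatb
        rw [hsumb, h] at this
        exact (this.1 rfl) j hj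
      rw [hz, h]; simp
    · rw [mul_comm, mul_div_assoc, div_self h, mul_one]

theorem Dm_main (n : ℕ) (m : ℝ) {i j : ℕ} (hi : i ≠ n+1) (hj : j ≠ n+1) :
    Dm n m i j = |(i : ℝ) - (j : ℝ)| := by
  unfold Dm; rw [if_neg hi, if_neg hj]

theorem Dm_row_sink (n : ℕ) (m : ℝ) {i j : ℕ} (hi : i = n+1) (hj : j ≠ n+1) :
    Dm n m i j = m := by
  unfold Dm; rw [if_pos hi, if_neg hj]

theorem cumsum_shift (n t : ℕ) (ht : t < n) (b b' : ℕ → ℝ)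
    (hbz : ∀ i ∈ Finset.Icc (n - t + 1) n, b i = 0)
    (hb'1 : ∀ i ∈ Finset.Icc (t + 1) n, b' i = b (i - t))
    (hb'2 : ∀ i ∈ Finset.Icc 1 t, b' i = 0) :
    cumsum b' n = cumsum b n := by
  unfold cumsum
  rw [ssplit n t (le_of_lt ht) b', ssplit n (n-t) (Nat.sub_le n t) b]
  have h1 : ∑ j ∈ Finset.Icc 1 t, b' j = 0 :=
    Finset.sum_eq_zero (fun j hj => hb'2 j hj)
  have h2 : ∑ j ∈ Finset.Icc (n-t+1) n, b j = 0 :=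
    Finset.sum_eq_zero (fun j hj => hbz j hj)
  rw [h1, h2, zero_add, add_zero]
  rw [Finset.sum_congr rfl hb'1, reidx n t (le_of_lt ht)]
  apply Finset.sum_congr rfl
  intro j hj; congr 1; omega

theorem shift_forward (n t : ℕ) (ht : t < n) (m : ℝ)
    (a b b' : ℕ → ℝ)
    (ha : ∀ i ∈ Finset.Icc 1 n, 0 ≤ a i)
    (hbz : ∀ i ∈ Finset.Icc (n - t + 1) n, b i = 0)
    (hb'1 : ∀ i ∈ Finset.Icc (t + 1) n, b' i = b (i - t))
    (hb'2 : ∀ i ∈ Finset.Icc 1 t, b' i = 0)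
    (T : ℕ → ℕ → ℝ) (hT : IsUPlan n a b T) :
    ∃ T', IsUPlan n a b' T' ∧ uCost n m T' ≤ uCost n m T + t * cumsum a n := by
  obtain ⟨hpos, hrow, hcol⟩ := hT
  have hcs := cumsum_shift n t ht b b' hbz hb'1 hb'2
  have hTz : ∀ j ∈ Finset.Icc (n-t+1) n, ∀ i ∈ Finset.Icc 1 (n+1), T i j = 0 := by
    intro j hj
    exact colzero n a b T ⟨hpos, hrow, hcol⟩ j
      (by simp [Finset.mem_Icc] at *; omega) (hbz j hj)
  set T' : ℕ → ℕ → ℝ :=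
    fun i j => if j = n+1 then T i (n+1) else if j ≤ t then 0 else T i (j-t) with hT'
  -- row sums of T equal the truncated sum plus sink
  have hrowT : ∀ i ∈ Finset.Icc 1 (n+1),
      ∑ j ∈ Finset.Icc 1 (n-t), T i j + T i (n+1) = extSeq n a (cumsum b n) i := by
    intro i hi
    rw [← hrow i hi, sIccTop]
    congr 1
    rw [ssplit n (n-t) (Nat.sub_le n t) (fun j => T i j)]
    have : ∑ j ∈ Finset.Icc (n-t+1) n, T i j = 0 :=
      Finset.sum_eq_zero (fun j hj => hTz j hj i hi)
    rw [this, add_zero]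
  -- row sums of T' in canonical form
  have hrowT' : ∀ i : ℕ, ∑ j ∈ Finset.Icc 1 (n+1), T' i j =
      ∑ j ∈ Finset.Icc 1 (n-t), T i j + T i (n+1) := by
    intro i
    rw [sIccTop]
    have hsink : T' i (n+1) = T i (n+1) := by simp [hT']
    rw [hsink]
    congr 1
    rw [ssplit n t (le_of_lt ht) (fun j => T' i j)]
    have h1 : ∑ j ∈ Finset.Icc 1 t, T' i j = 0 := by
      apply Finset.sum_eq_zero
      intro j hj; simp [Finset.mem_Icc] at hj
      simp only [hT']
      rw [if_neg (by omega), if_pos (by omega)]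
    have h2 : ∑ j ∈ Finset.Icc (t+1) n, T' i j = ∑ j ∈ Finset.Icc 1 (n-t), T i j := by
      have he : ∀ j ∈ Finset.Icc (t+1) n, T' i j = T i (j-t) := by
        intro j hj; simp [Finset.mem_Icc] at hj
        simp only [hT']
        rw [if_neg (by omega), if_neg (by omega)]
      rw [Finset.sum_congr rfl he, reidx n t (le_of_lt ht)]
      apply Finset.sum_congr rfl
      intro j hj; congr 1; omega
    rw [h1, h2, zero_add]
  refine ⟨T', ⟨?_, ?_, ?_⟩, ?_⟩
  · -- nonneg
    intro i hi j hj
    simp only [hT']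
    split_ifs with h1 h2
    · exact hpos i hi (n+1) (by simp [Finset.mem_Icc])
    · exact le_refl 0
    · simp [Finset.mem_Icc] at hj
      exact hpos i hi (j-t) (by simp [Finset.mem_Icc]; omega)
  · -- row sums
    intro i hi
    rw [hrowT' i, hrowT i hi, hcs]
  · -- col sums
    intro j hj
    simp only [Finset.mem_Icc] at hj
    by_cases h1 : j = n+1
    · subst h1
      have he : ∀ i ∈ Finset.Icc 1 (n+1), T' i (n+1) = T i (n+1) := by
        intro i hi; simp [hT']
      rw [Finset.sum_congr rfl he, hcol (n+1) (by simp [Finset.mem_Icc]),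
        extSeq, extSeq, if_pos rfl, if_pos rfl]
    · by_cases h2 : j ≤ t
      · have he : ∀ i ∈ Finset.Icc 1 (n+1), T' i j = 0 := by
          intro i hi; simp only [hT']; rw [if_neg h1, if_pos h2]
        rw [Finset.sum_congr rfl he, Finset.sum_const, smul_zero,
          extSeq, if_neg h1, hb'2 j (by simp [Finset.mem_Icc]; omega)]
      · have he : ∀ i ∈ Finset.Icc 1 (n+1), T' i j = T i (j-t) := by
          intro i hi; simp only [hT']; rw [if_neg h1, if_neg h2]
        rw [Finset.sum_congr rfl he,
          hcol (j-t) (by simp [Finset.mem_Icc]; omega),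
          extSeq, extSeq, if_neg (by omega : ¬ j - t = n+1), if_neg h1,
          hb'1 j (by simp [Finset.mem_Icc]; omega)]
  · -- cost bound
    unfold uCost
    have key : ∀ i ∈ Finset.Icc 1 (n+1),
        ∑ j ∈ Finset.Icc 1 (n+1), T' i j * Dm n m i j ≤
        ∑ j ∈ Finset.Icc 1 (n+1), T i j * Dm n m i j +
          (if i = n+1 then 0 else t * a i) := by
      intro i hi
      -- canonical forms
      have lhs_eq : ∑ j ∈ Finset.Icc 1 (n+1), T' i j * Dm n m i j =
          ∑ j ∈ Finset.Icc 1 (n-t), T i j * Dm n m i (j+t) +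
            T i (n+1) * Dm n m i (n+1) := by
        rw [sIccTop]
        have hsink : T' i (n+1) = T i (n+1) := by simp [hT']
        rw [hsink]
        congr 1
        rw [ssplit n t (le_of_lt ht) (fun j => T' i j * Dm n m i j)]
        have h1 : ∑ j ∈ Finset.Icc 1 t, T' i j * Dm n m i j = 0 := by
          apply Finset.sum_eq_zero
          intro j hj; simp [Finset.mem_Icc] at hj
          simp only [hT']
          rw [if_neg (by omega), if_pos (by omega), zero_mul]
        have h2 : ∑ j ∈ Finset.Icc (t+1) n, T' i j * Dm n m i j =
            ∑ j ∈ Finset.Icc 1 (n-t), T i j * Dm n m i (j+t) := by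
          have he : ∀ j ∈ Finset.Icc (t+1) n, T' i j * Dm n m i j
              = T i (j-t) * Dm n m i j := by
            intro j hj; simp [Finset.mem_Icc] at hj
            simp only [hT']
            rw [if_neg (by omega), if_neg (by omega)]
          rw [Finset.sum_congr rfl he, reidx n t (le_of_lt ht)]
          apply Finset.sum_congr rfl
          intro j hj; simp [Finset.mem_Icc] at hj
          congr 2 <;> omega
        rw [h1, h2, zero_add]
      have rhs_eq : ∑ j ∈ Finset.Icc 1 (n+1), T i j * Dm n m i j =
          ∑ j ∈ Finset.Icc 1 (n-t), T i j * Dm n m i j +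
            T i (n+1) * Dm n m i (n+1) := by
        rw [sIccTop]
        congr 1
        rw [ssplit n (n-t) (Nat.sub_le n t) (fun j => T i j * Dm n m i j)]
        have : ∑ j ∈ Finset.Icc (n-t+1) n, T i j * Dm n m i j = 0 := by
          apply Finset.sum_eq_zero
          intro j hj
          rw [hTz j hj i hi, zero_mul]
        rw [this, add_zero]
      rw [lhs_eq, rhs_eq]
      by_cases hin : i = n+1
      · rw [if_pos hin, add_zero]
        have : ∀ j ∈ Finset.Icc 1 (n-t), T i j * Dm n m i (j+t) = T i j * Dm n m i j := by
          intro j hj; simp [Finset.mem_Icc] at hj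
          rw [Dm_row_sink n m hin (by omega), Dm_row_sink n m hin (by omega)]
        rw [Finset.sum_congr rfl this]
      · rw [if_neg hin]
        have hsub : ∑ j ∈ Finset.Icc 1 (n-t), T i j ≤ a i := by
          have h1 : ∑ j ∈ Finset.Icc 1 (n+1), T i j = a i := by
            rw [hrow i hi, extSeq, if_neg hin]
          rw [← h1]
          apply Finset.sum_le_sum_of_subset_of_nonneg
          · apply Finset.Icc_subset_Icc_right; omega
          · intro j hj _; exact hpos i hi j hj
        have hterm : ∀ j ∈ Finset.Icc 1 (n-t),
            T i j * Dm n m i (j+t) ≤ T i j * Dm n m i j + T i j * t := by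
          intro j hj; simp [Finset.mem_Icc] at hj
          have hTnn : 0 ≤ T i j := hpos i hi j (by simp [Finset.mem_Icc]; omega)
          have hD : Dm n m i (j+t) ≤ Dm n m i j + t := by
            rw [Dm_main n m hin (by omega), Dm_main n m hin (by omega)]
            have h3 : |(i:ℝ) - ((j+t : ℕ):ℝ)| ≤ |(i:ℝ) - (j:ℝ)| + |(j:ℝ) - ((j+t:ℕ):ℝ)| :=
              abs_sub_le _ _ _
            have h4 : |(j:ℝ) - ((j+t:ℕ):ℝ)| = t := by
              push_cast; rw [abs_sub_comm]
              rw [show (j:ℝ) + t - j = t by ring, abs_of_nonneg (by positivity)]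
            linarith
          nlinarith [mul_le_mul_of_nonneg_left hD hTnn]
        have hmain : ∑ j ∈ Finset.Icc 1 (n-t), T i j * Dm n m i (j+t)
            ≤ ∑ j ∈ Finset.Icc 1 (n-t), T i j * Dm n m i j + t * a i := by
          calc ∑ j ∈ Finset.Icc 1 (n-t), T i j * Dm n m i (j+t)
            ≤ ∑ j ∈ Finset.Icc 1 (n-t), (T i j * Dm n m i j + T i j * t) :=
                Finset.sum_le_sum hterm
            _ = ∑ j ∈ Finset.Icc 1 (n-t), T i j * Dm n m i j
                + (∑ j ∈ Finset.Icc 1 (n-t), T i j) * t := by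
                rw [Finset.sum_add_distrib, Finset.sum_mul]
            _ ≤ ∑ j ∈ Finset.Icc 1 (n-t), T i j * Dm n m i j + a i * t := by
                have : (∑ j ∈ Finset.Icc 1 (n-t), T i j) * t ≤ a i * t :=
                  mul_le_mul_of_nonneg_right hsub (by positivity)
                linarith
            _ = ∑ j ∈ Finset.Icc 1 (n-t), T i j * Dm n m i j + t * a i := by ring
        linarith
    calc ∑ i ∈ Finset.Icc 1 (n+1), ∑ j ∈ Finset.Icc 1 (n+1), T' i j * Dm n m i j
        ≤ ∑ i ∈ Finset.Icc 1 (n+1), (∑ j ∈ Finset.Icc 1 (n+1), T i j * Dm n m i j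
            + (if i = n+1 then 0 else t * a i)) := Finset.sum_le_sum key
      _ = ∑ i ∈ Finset.Icc 1 (n+1), ∑ j ∈ Finset.Icc 1 (n+1), T i j * Dm n m i j
          + ∑ i ∈ Finset.Icc 1 (n+1), (if i = n+1 then 0 else t * a i) := by
          rw [Finset.sum_add_distrib]
      _ = ∑ i ∈ Finset.Icc 1 (n+1), ∑ j ∈ Finset.Icc 1 (n+1), T i j * Dm n m i j
          + t * cumsum a n := by
          congr 1
          rw [sIccTop, if_pos rfl, add_zero]
          have : ∀ i ∈ Finset.Icc 1 n, (if i = n+1 then (0:ℝ) else t * a i) = t * a i := by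
            intro i hi; simp [Finset.mem_Icc] at hi; rw [if_neg (by omega)]
          rw [Finset.sum_congr rfl this, ← Finset.mul_sum]
          rfl

theorem shift_backward (n t : ℕ) (ht : t < n) (m : ℝ)
    (a b b' : ℕ → ℝ)
    (ha : ∀ i ∈ Finset.Icc 1 n, 0 ≤ a i)
    (hbz : ∀ i ∈ Finset.Icc (n - t + 1) n, b i = 0)
    (hb'1 : ∀ i ∈ Finset.Icc (t + 1) n, b' i = b (i - t))
    (hb'2 : ∀ i ∈ Finset.Icc 1 t, b' i = 0)
    (T' : ℕ → ℕ → ℝ) (hT : IsUPlan n a b' T') :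
    ∃ T, IsUPlan n a b T ∧ uCost n m T ≤ uCost n m T' + t * cumsum a n := by
  obtain ⟨hpos, hrow, hcol⟩ := hT
  have hcs := cumsum_shift n t ht b b' hbz hb'1 hb'2
  have hTz : ∀ j ∈ Finset.Icc 1 t, ∀ i ∈ Finset.Icc 1 (n+1), T' i j = 0 := by
    intro j hj
    exact colzero n a b' T' ⟨hpos, hrow, hcol⟩ j
      (by simp [Finset.mem_Icc] at *; omega) (hb'2 j hj)
  set T : ℕ → ℕ → ℝ :=
    fun i j => if j = n+1 then T' i (n+1) else if j ≤ n-t then T' i (j+t) else 0 with hTdef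
  have hrowT' : ∀ i ∈ Finset.Icc 1 (n+1),
      ∑ j ∈ Finset.Icc 1 (n-t), T' i (j+t) + T' i (n+1) = extSeq n a (cumsum b' n) i := by
    intro i hi
    rw [← hrow i hi, sIccTop]
    congr 1
    rw [ssplit n t (le_of_lt ht) (fun j => T' i j)]
    have h1 : ∑ j ∈ Finset.Icc 1 t, T' i j = 0 :=
      Finset.sum_eq_zero (fun j hj => hTz j hj i hi)
    rw [h1, zero_add, reidx n t (le_of_lt ht)]
  have hrowT : ∀ i : ℕ, ∑ j ∈ Finset.Icc 1 (n+1), T i j =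
      ∑ j ∈ Finset.Icc 1 (n-t), T' i (j+t) + T' i (n+1) := by
    intro i
    rw [sIccTop]
    have hsink : T i (n+1) = T' i (n+1) := by simp [hTdef]
    rw [hsink]
    congr 1
    rw [ssplit n (n-t) (Nat.sub_le n t) (fun j => T i j)]
    have h1 : ∑ j ∈ Finset.Icc (n-t+1) n, T i j = 0 := by
      apply Finset.sum_eq_zero
      intro j hj; simp [Finset.mem_Icc] at hj
      simp only [hTdef]
      rw [if_neg (by omega), if_neg (by omega)]
    have h2 : ∀ j ∈ Finset.Icc 1 (n-t), T i j = T' i (j+t) := by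
      intro j hj; simp [Finset.mem_Icc] at hj
      simp only [hTdef]
      rw [if_neg (by omega), if_pos (by omega)]
    rw [h1, add_zero, Finset.sum_congr rfl h2]
  refine ⟨T, ⟨?_, ?_, ?_⟩, ?_⟩
  · intro i hi j hj
    simp only [hTdef]
    split_ifs with h1 h2
    · exact hpos i hi (n+1) (by simp [Finset.mem_Icc])
    · simp [Finset.mem_Icc] at hj
      exact hpos i hi (j+t) (by simp [Finset.mem_Icc]; omega)
    · exact le_refl 0
  · intro i hi
    rw [hrowT i, hrowT' i hi, hcs]
  · intro j hj
    simp only [Finset.mem_Icc] at hj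
    by_cases h1 : j = n+1
    · subst h1
      have he : ∀ i ∈ Finset.Icc 1 (n+1), T i (n+1) = T' i (n+1) := by
        intro i hi; simp [hTdef]
      rw [Finset.sum_congr rfl he, hcol (n+1) (by simp [Finset.mem_Icc]),
        extSeq, extSeq, if_pos rfl, if_pos rfl]
    · by_cases h2 : j ≤ n-t
      · have he : ∀ i ∈ Finset.Icc 1 (n+1), T i j = T' i (j+t) := by
          intro i hi; simp only [hTdef]; rw [if_neg h1, if_pos h2]
        rw [Finset.sum_congr rfl he,
          hcol (j+t) (by simp [Finset.mem_Icc]; omega),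
          extSeq, extSeq, if_neg (by omega : ¬ j + t = n+1), if_neg h1,
          hb'1 (j+t) (by simp [Finset.mem_Icc]; omega)]
        congr 1; omega
      · have he : ∀ i ∈ Finset.Icc 1 (n+1), T i j = 0 := by
          intro i hi; simp only [hTdef]; rw [if_neg h1, if_neg h2]
        rw [Finset.sum_congr rfl he, Finset.sum_const, smul_zero,
          extSeq, if_neg h1, hbz j (by simp [Finset.mem_Icc]; omega)]
  · unfold uCost
    have key : ∀ i ∈ Finset.Icc 1 (n+1),
        ∑ j ∈ Finset.Icc 1 (n+1), T i j * Dm n m i j ≤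
        ∑ j ∈ Finset.Icc 1 (n+1), T' i j * Dm n m i j +
          (if i = n+1 then 0 else t * a i) := by
      intro i hi
      have lhs_eq : ∑ j ∈ Finset.Icc 1 (n+1), T i j * Dm n m i j =
          ∑ j ∈ Finset.Icc 1 (n-t), T' i (j+t) * Dm n m i j +
            T' i (n+1) * Dm n m i (n+1) := by
        rw [sIccTop]
        have hsink : T i (n+1) = T' i (n+1) := by simp [hTdef]
        rw [hsink]
        congr 1
        rw [ssplit n (n-t) (Nat.sub_le n t) (fun j => T i j * Dm n m i j)]
        have h1 : ∑ j ∈ Finset.Icc (n-t+1) n, T i j * Dm n m i j = 0 := by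
          apply Finset.sum_eq_zero
          intro j hj; simp [Finset.mem_Icc] at hj
          simp only [hTdef]
          rw [if_neg (by omega), if_neg (by omega), zero_mul]
        have h2 : ∀ j ∈ Finset.Icc 1 (n-t), T i j * Dm n m i j
            = T' i (j+t) * Dm n m i j := by
          intro j hj; simp [Finset.mem_Icc] at hj
          simp only [hTdef]
          rw [if_neg (by omega), if_pos (by omega)]
        rw [h1, add_zero, Finset.sum_congr rfl h2]
      have rhs_eq : ∑ j ∈ Finset.Icc 1 (n+1), T' i j * Dm n m i j =
          ∑ j ∈ Finset.Icc 1 (n-t), T' i (j+t) * Dm n m i (j+t) +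
            T' i (n+1) * Dm n m i (n+1) := by
        rw [sIccTop]
        congr 1
        rw [ssplit n t (le_of_lt ht) (fun j => T' i j * Dm n m i j)]
        have h1 : ∑ j ∈ Finset.Icc 1 t, T' i j * Dm n m i j = 0 := by
          apply Finset.sum_eq_zero
          intro j hj
          rw [hTz j hj i hi, zero_mul]
        rw [h1, zero_add, reidx n t (le_of_lt ht)]
      rw [lhs_eq, rhs_eq]
      by_cases hin : i = n+1
      · rw [if_pos hin, add_zero]
        have : ∀ j ∈ Finset.Icc 1 (n-t), T' i (j+t) * Dm n m i j
            = T' i (j+t) * Dm n m i (j+t) := by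
          intro j hj; simp [Finset.mem_Icc] at hj
          rw [Dm_row_sink n m hin (by omega), Dm_row_sink n m hin (by omega)]
        rw [Finset.sum_congr rfl this]
      · rw [if_neg hin]
        have hsub : ∑ j ∈ Finset.Icc 1 (n-t), T' i (j+t) ≤ a i := by
          have h1 : ∑ j ∈ Finset.Icc 1 (n+1), T' i j = a i := by
            rw [hrow i hi, extSeq, if_neg hin]
          rw [← h1, ← reidx n t (le_of_lt ht)]
          apply Finset.sum_le_sum_of_subset_of_nonneg
          · apply Finset.Icc_subset_Icc <;> omega
          · intro j hj _; exact hpos i hi j hj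
        have hterm : ∀ j ∈ Finset.Icc 1 (n-t),
            T' i (j+t) * Dm n m i j ≤ T' i (j+t) * Dm n m i (j+t) + T' i (j+t) * t := by
          intro j hj; simp [Finset.mem_Icc] at hj
          have hTnn : 0 ≤ T' i (j+t) := hpos i hi (j+t) (by simp [Finset.mem_Icc]; omega)
          have hD : Dm n m i j ≤ Dm n m i (j+t) + t := by
            rw [Dm_main n m hin (by omega), Dm_main n m hin (by omega)]
            have h3 : |(i:ℝ) - (j:ℝ)| ≤ |(i:ℝ) - ((j+t:ℕ):ℝ)| + |((j+t:ℕ):ℝ) - (j:ℝ)| :=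
              abs_sub_le _ _ _
            have h4 : |((j+t:ℕ):ℝ) - (j:ℝ)| = t := by
              push_cast
              rw [show (j:ℝ) + t - j = t by ring, abs_of_nonneg (by positivity)]
            linarith
          nlinarith [mul_le_mul_of_nonneg_left hD hTnn]
        have hmain : ∑ j ∈ Finset.Icc 1 (n-t), T' i (j+t) * Dm n m i j
            ≤ ∑ j ∈ Finset.Icc 1 (n-t), T' i (j+t) * Dm n m i (j+t) + t * a i := by
          calc ∑ j ∈ Finset.Icc 1 (n-t), T' i (j+t) * Dm n m i j
            ≤ ∑ j ∈ Finset.Icc 1 (n-t), (T' i (j+t) * Dm n m i (j+t) + T' i (j+t) * t) :=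
                Finset.sum_le_sum hterm
            _ = ∑ j ∈ Finset.Icc 1 (n-t), T' i (j+t) * Dm n m i (j+t)
                + (∑ j ∈ Finset.Icc 1 (n-t), T' i (j+t)) * t := by
                rw [Finset.sum_add_distrib, Finset.sum_mul]
            _ ≤ ∑ j ∈ Finset.Icc 1 (n-t), T' i (j+t) * Dm n m i (j+t) + a i * t := by
                have : (∑ j ∈ Finset.Icc 1 (n-t), T' i (j+t)) * t ≤ a i * t :=
                  mul_le_mul_of_nonneg_right hsub (by positivity)
                linarith
            _ = ∑ j ∈ Finset.Icc 1 (n-t), T' i (j+t) * Dm n m i (j+t) + t * a i := by ring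
        linarith
    calc ∑ i ∈ Finset.Icc 1 (n+1), ∑ j ∈ Finset.Icc 1 (n+1), T i j * Dm n m i j
        ≤ ∑ i ∈ Finset.Icc 1 (n+1), (∑ j ∈ Finset.Icc 1 (n+1), T' i j * Dm n m i j
            + (if i = n+1 then 0 else t * a i)) := Finset.sum_le_sum key
      _ = ∑ i ∈ Finset.Icc 1 (n+1), ∑ j ∈ Finset.Icc 1 (n+1), T' i j * Dm n m i j
          + ∑ i ∈ Finset.Icc 1 (n+1), (if i = n+1 then 0 else t * a i) := by
          rw [Finset.sum_add_distrib]
      _ = ∑ i ∈ Finset.Icc 1 (n+1), ∑ j ∈ Finset.Icc 1 (n+1), T' i j * Dm n m i j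
          + t * cumsum a n := by
          congr 1
          rw [sIccTop, if_pos rfl, add_zero]
          have : ∀ i ∈ Finset.Icc 1 n, (if i = n+1 then (0:ℝ) else t * a i) = t * a i := by
            intro i hi; simp [Finset.mem_Icc] at hi; rw [if_neg (by omega)]
          rw [Finset.sum_congr rfl this, ← Finset.mul_sum]
          rfl

theorem sInf_shift_le {S S' : Set ℝ} (hS : S.Nonempty) (hS' : BddBelow S') (c : ℝ)
    (h : ∀ x ∈ S, ∃ y ∈ S', y ≤ x + c) : sInf S' ≤ sInf S + c := by
  have h2 : ∀ x ∈ S, sInf S' - c ≤ x := by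
    intro x hx
    obtain ⟨y, hy, hyx⟩ := h x hx
    have := csInf_le hS' hy
    linarith
  have := le_csInf hS h2
  linarith


/-- shift sensitivity of the unbalanced OT distance. -/
theorem unbalanced_shift_sensitivity (n t : ℕ) (ht : t < n) (m : ℝ) (hm : 0 ≤ m)
    (a b b' : ℕ → ℝ)
    (ha : ∀ i ∈ Finset.Icc 1 n, 0 ≤ a i) (hb : ∀ i ∈ Finset.Icc 1 n, 0 ≤ b i)
    (hbz : ∀ i ∈ Finset.Icc (n - t + 1) n, b i = 0)
    (hb'1 : ∀ i ∈ Finset.Icc (t + 1) n, b' i = b (i - t))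
    (hb'2 : ∀ i ∈ Finset.Icc 1 t, b' i = 0) :
    |uW n m a b' - uW n m a b| ≤ (t : ℝ) * cumsum a n := by
  have hb' : ∀ i ∈ Finset.Icc 1 n, 0 ≤ b' i := by
    intro i hi; simp [Finset.mem_Icc] at hi
    by_cases h : i ≤ t
    · rw [hb'2 i (by simp [Finset.mem_Icc]; omega)]
    · rw [hb'1 i (by simp [Finset.mem_Icc]; omega)]
      exact hb (i-t) (by simp [Finset.mem_Icc]; omega)
  set S : Set ℝ := {c | ∃ T, IsUPlan n a b T ∧ c = uCost n m T} with hSdef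
  set S' : Set ℝ := {c | ∃ T, IsUPlan n a b' T ∧ c = uCost n m T} with hS'def
  have hSne : S.Nonempty := by
    obtain ⟨T, hT⟩ := uPlan_exists n a b ha hb
    exact ⟨uCost n m T, T, hT, rfl⟩
  have hS'ne : S'.Nonempty := by
    obtain ⟨T, hT⟩ := uPlan_exists n a b' ha hb'
    exact ⟨uCost n m T, T, hT, rfl⟩
  have hSbdd : BddBelow S := uW_bddBelow n m hm a b
  have hS'bdd : BddBelow S' := uW_bddBelow n m hm a b'
  have h1 : sInf S' ≤ sInf S + t * cumsum a n := by
    apply sInf_shift_le hSne hS'bdd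
    rintro x ⟨T, hT, rfl⟩
    obtain ⟨T', hT', hc⟩ := shift_forward n t ht m a b b' ha hbz hb'1 hb'2 T hT
    exact ⟨uCost n m T', ⟨T', hT', rfl⟩, hc⟩
  have h2 : sInf S ≤ sInf S' + t * cumsum a n := by
    apply sInf_shift_le hS'ne hSbdd
    rintro x ⟨T', hT', rfl⟩
    obtain ⟨T, hT, hc⟩ := shift_backward n t ht m a b b' ha hbz hb'1 hb'2 T' hT'
    exact ⟨uCost n m T, ⟨T, hT, rfl⟩, hc⟩
  have e1 : uW n m a b' = sInf S' := rfl
  have e2 : uW n m a b = sInf S := rfl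
  rw [abs_sub_le_iff, e1, e2]
  exact ⟨by linarith, by linarith⟩

end
end

section
/- Let a ∈ ℝ^n be nonnegative and b' the shift of a by t units (b'_i = a_{i−t} for i > t, b'_i = 0 for i ≤ t), and suppose a_{n−t+1} = ... = a_n = 0 so no mass is lost. Then the global OTW distance with any m satisfies OTW_m(a, b') ≤ t·(∑_{i=1}^n a_i). -/
open Finset

noncomputable section

/-!
Because `b'` is `a` delayed by `t`, `A(i) - B'(i)` is the sum of `a` over the window `(i - t, i]`:
it is nonnegative, vanishes at `i = n` by the zero padding, and summing the windows over `i`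
counts each `a j` at most `t` times.
-/

theorem cumsum_succ (a : ℕ → ℝ) (i : ℕ) : cumsum a (i + 1) = cumsum a i + a (i + 1) :=
  sum_Icc_succ_top (Nat.le_add_left 1 i) a

theorem cumsum_sub_cumsum {a : ℕ → ℝ} {i j : ℕ} (hji : j ≤ i) :
    cumsum a i - cumsum a j = ∑ k ∈ Ioc j i, a k := by
  have h := sum_Ioc_consecutive a (Nat.zero_le j) hji
  simp only [cumsum, ← Icc_add_one_left_eq_Ioc, zero_add] at h ⊢
  linarith

theorem cumsum_of_shift {n t : ℕ} {a b : ℕ → ℝ}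
    (hb_shift : ∀ i ∈ Icc (t + 1) n, b i = a (i - t)) (hb_zero : ∀ i ∈ Icc 1 t, b i = 0) :
    ∀ i ≤ n, cumsum b i = cumsum a (i - t)
  | 0, _ => by simp [cumsum]
  | k + 1, hk => by
    rw [cumsum_succ, cumsum_of_shift hb_shift hb_zero k (by omega)]
    by_cases hkt : k + 1 ≤ t
    · rw [hb_zero (k + 1) (mem_Icc.mpr ⟨by omega, hkt⟩), Nat.sub_eq_zero_of_le hkt,
        Nat.sub_eq_zero_of_le (by omega), add_zero]
    · rw [hb_shift (k + 1) (mem_Icc.mpr ⟨by omega, hk⟩), show k + 1 - t = k - t + 1 by omega,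
        cumsum_succ]

theorem card_filter_mem_Ioc_sub_le (s : Finset ℕ) (t j : ℕ) :
    #{i ∈ s | j ∈ Ioc (i - t) i} ≤ t := by
  calc #{i ∈ s | j ∈ Ioc (i - t) i}
      _ ≤ #(Ico j (j + t)) := card_le_card fun i hi => by
        simp only [mem_filter, mem_Ioc] at hi
        exact mem_Ico.mpr ⟨hi.2.2, by omega⟩
      _ = t := by simp

theorem sum_sum_Ioc_sub_le {n N t : ℕ} {a : ℕ → ℝ} (hN : N ≤ n)
    (ha : ∀ i ∈ Icc 1 n, 0 ≤ a i) :
    ∑ i ∈ Icc 1 N, ∑ j ∈ Ioc (i - t) i, a j ≤ t * cumsum a n := by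
  have hswap : ∑ i ∈ Icc 1 N, ∑ j ∈ Ioc (i - t) i, a j
      = ∑ j ∈ Icc 1 n, ∑ _i ∈ {i ∈ Icc 1 N | j ∈ Ioc (i - t) i}, a j :=
    sum_comm' fun i j => by simp only [mem_filter, mem_Icc, mem_Ioc]; omega
  rw [hswap, cumsum, mul_sum]
  refine sum_le_sum fun j hj => ?_
  rw [sum_const, nsmul_eq_mul]
  exact mul_le_mul_of_nonneg_right (by exact_mod_cast card_filter_mem_Ioc_sub_le _ t j) (ha j hj)

theorem otwGlobal_shift_le_general (n t : ℕ) (m : ℝ) (a b' : ℕ → ℝ)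
    (ha : ∀ i ∈ Finset.Icc 1 n, 0 ≤ a i)
    (haz : ∀ i ∈ Finset.Icc (n - t + 1) n, a i = 0)
    (hb'1 : ∀ i ∈ Finset.Icc (t + 1) n, b' i = a (i - t))
    (hb'2 : ∀ i ∈ Finset.Icc 1 t, b' i = 0) :
    otwGlobal n m a b' ≤ (t : ℝ) * cumsum a n := by
  have hwindow : ∀ i ≤ n, cumsum a i - cumsum b' i = ∑ j ∈ Ioc (i - t) i, a j := fun i hi => by
    rw [cumsum_of_shift hb'1 hb'2 i hi, cumsum_sub_cumsum (Nat.sub_le i t)]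
  have hmass : cumsum a n - cumsum b' n = 0 := by
    rw [hwindow n le_rfl]
    exact sum_eq_zero fun j hj => haz j (by simp only [mem_Ioc, mem_Icc] at hj ⊢; omega)
  have habs : ∀ i ∈ Icc 1 (n - 1), |cumsum a i - cumsum b' i| = ∑ j ∈ Ioc (i - t) i, a j :=
    fun i hi => by
      simp only [mem_Icc] at hi
      rw [hwindow i (by omega)]
      exact abs_of_nonneg <| sum_nonneg fun j hj =>
        ha j (by simp only [mem_Ioc, mem_Icc] at hj ⊢; omega)
  rw [otwGlobal, hmass, abs_zero, mul_zero, zero_add, sum_congr rfl habs]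
  exact sum_sum_Ioc_sub_le (Nat.sub_le n 1) ha

/-- global OTW between a zero-padded sequence and its shift by `t`
is at most `t` times the total mass. -/
theorem otwGlobal_shift_le (n t : ℕ) (ht : t ≤ n) (m : ℝ) (a b' : ℕ → ℝ)
    (ha : ∀ i ∈ Finset.Icc 1 n, 0 ≤ a i)
    (haz : ∀ i ∈ Finset.Icc (n - t + 1) n, a i = 0)
    (hb'1 : ∀ i ∈ Finset.Icc (t + 1) n, b' i = a (i - t))
    (hb'2 : ∀ i ∈ Finset.Icc 1 t, b' i = 0) :
    otwGlobal n m a b' ≤ (t : ℝ) * cumsum a n :=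
  otwGlobal_shift_le_general n t m a b' ha haz hb'1 hb'2

end
end
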